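/- arXiv:1802.05859 — 7 statements merged into one kernel-verified Lean document; each statement's English description precedes it below -/
import Mathlib

section
/- Every subset of the integer lattice Z^n has only finitely many minimal elements with respect to the conformal (sign-compatible) partial order, where x is conformal to y if x_i * y_i >= 0 and |x_i| <= |y_i| for every coordinate i. -/
/-- The conformal (sign-compatible) partial order on `ℤ^n`:
`x ⊑ y` iff `x i * y i ≥ 0` and `|x i| ≤ |y i|` for all `i`. -/
def ConformalLE {n : ℕ} (x y : Fin n → ℤ) : Prop :=
  ∀ i, 0 ≤ x i * y i ∧ |x i| ≤ |y i|

/-- Embed `ℤ^n` into `ℕ^(n × Bool)` via positive/negative parts. -/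
def confEmbed {n : ℕ} (x : Fin n → ℤ) : Fin n × Bool → ℕ :=
  fun p => if p.2 then (x p.1).toNat else (-x p.1).toNat

lemma confEmbed_le {n : ℕ} {x y : Fin n → ℤ} (h : confEmbed x ≤ confEmbed y) :
    ConformalLE x y := by
  intro i
  have h1 := h (i, true)
  have h2 := h (i, false)
  simp [confEmbed] at h1 h2
  have key : (0 ≤ x i ∧ x i ≤ y i) ∨ (y i ≤ x i ∧ x i ≤ 0) := by omega
  constructor
  · rcases key with ⟨h3, h4⟩ | ⟨h3, h4⟩ <;> nlinarith
  · rcases abs_cases (x i) with ⟨e1, e2⟩ | ⟨e1, e2⟩ <;>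
      rcases abs_cases (y i) with ⟨f1, f2⟩ | ⟨f1, f2⟩ <;> omega

lemma confEmbed_inj {n : ℕ} : Function.Injective (confEmbed (n := n)) := by
  intro x y h
  funext i
  have h1 := congrFun h (i, true)
  have h2 := congrFun h (i, false)
  simp [confEmbed] at h1 h2
  omega

/-- Every subset of `ℤ^n` has only finitely many `⊑`-minimal elements. -/
theorem finitely_many_conformal_minimal_elements (n : ℕ) (S : Set (Fin n → ℤ)) :
    {x ∈ S | ∀ y ∈ S, ConformalLE y x → y = x}.Finite := by
  by_contra hinf
  have hinf : Set.Infinite _ := hinf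
  have f := hinf.natEmbedding _
  have hpwo : Set.IsPWO (Set.univ : Set (Fin n × Bool → ℕ)) :=
    Set.isPWO_of_wellQuasiOrderedLE _
  obtain ⟨a, b, hab, hle⟩ := hpwo.exists_lt (f := fun k => confEmbed (f k).1) (fun _ => Set.mem_univ _)
  have h := confEmbed_le hle
  have hfa := (f a).2
  have hfb := (f b).2
  have := hfb.2 (f a).1 hfa.1 h
  exact hab.ne (f.injective (Subtype.ext this))
end

section
/- The Graver basis of an integer m×n matrix A, defined as the set of ⊑-minimal elements of {x ∈ Z^n : Ax = 0, x ≠ 0}, is a finite set. -/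
/-- The Graver basis of an integer `m × n` matrix `A`: the set of `⊑`-minimal
elements of `{x ∈ ℤ^n : Ax = 0, x ≠ 0}`. -/
def GraverBasis {m n : ℕ} (A : Matrix (Fin m) (Fin n) ℤ) : Set (Fin n → ℤ) :=
  {g | A.mulVec g = 0 ∧ g ≠ 0 ∧
    ∀ h : Fin n → ℤ, A.mulVec h = 0 → h ≠ 0 → ConformalLE h g → h = g}

/-- Encode an integer vector as its positive and negative parts. -/
def graverEnc {n : ℕ} (x : Fin n → ℤ) : (Fin n ⊕ Fin n) → ℕ :=
  Sum.elim (fun i => (x i).toNat) (fun i => (-(x i)).toNat)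

lemma graverEnc_le_conformal {n : ℕ} {a b : Fin n → ℤ}
    (h : graverEnc a ≤ graverEnc b) : ConformalLE a b := by
  intro i
  have h1 : (a i).toNat ≤ (b i).toNat := h (Sum.inl i)
  have h2 : (-(a i)).toNat ≤ (-(b i)).toNat := h (Sum.inr i)
  rcases lt_trichotomy (a i) 0 with ha | ha | ha
  · have hb : b i < 0 := by omega
    rw [abs_of_neg ha, abs_of_neg hb]
    refine ⟨le_of_lt (mul_pos_of_neg_of_neg ha hb), by omega⟩
  · exact ⟨by simp [ha], by rw [ha, abs_zero]; exact abs_nonneg _⟩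
  · have hb : 0 < b i := by omega
    rw [abs_of_pos ha, abs_of_pos hb]
    refine ⟨le_of_lt (mul_pos ha hb), by omega⟩

lemma graverEnc_injective {n : ℕ} : Function.Injective (graverEnc (n := n)) := by
  intro a b hab
  funext i
  have h1 : (a i).toNat = (b i).toNat := congrFun hab (Sum.inl i)
  have h2 : (-(a i)).toNat = (-(b i)).toNat := congrFun hab (Sum.inr i)
  omega

/-- The Graver basis of an integer matrix is a finite set. -/
theorem graverBasis_finite {m n : ℕ} (A : Matrix (Fin m) (Fin n) ℤ) :
    (GraverBasis A).Finite := by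
  have hfin : (graverEnc '' GraverBasis A).Finite := by
    have hanti : IsAntichain (· ≤ ·) (graverEnc '' GraverBasis A) := by
      rintro _ ⟨a, ha, rfl⟩ _ ⟨b, hb, rfl⟩ hne hle
      exact hne (congrArg graverEnc
        (hb.2.2 a ha.1 ha.2.1 (graverEnc_le_conformal hle)))
    exact hanti.finite_of_partiallyWellOrderedOn
      (Set.isPWO_of_wellQuasiOrderedLE _)
  exact Set.Finite.of_finite_image hfin graverEnc_injective.injOn
end

section
/- Every nonzero integer vector x in the kernel of an integer matrix A can be written as a sign-compatible sum of elements of the Graver basis of A, i.e., x = g_1 + ... + g_k where each g_i ∈ G(A) and g_i ⊑ x. -/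
private lemma sign_cases {a b : ℤ} (hs : 0 ≤ a * b) :
    (0 ≤ a ∧ 0 ≤ b) ∨ (a ≤ 0 ∧ b ≤ 0) := by
  rcases le_or_gt 0 a with h | h <;> rcases le_or_gt 0 b with h' | h'
  · exact Or.inl ⟨h, h'⟩
  · right; exact ⟨by nlinarith, h'.le⟩
  · right; exact ⟨h.le, by nlinarith⟩
  · exact Or.inr ⟨h.le, h'.le⟩

private lemma conf_coord_trans {a b c : ℤ} (s1 : 0 ≤ a * b) (b1 : |a| ≤ |b|)
    (s2 : 0 ≤ b * c) (b2 : |b| ≤ |c|) : 0 ≤ a * c ∧ |a| ≤ |c| := by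
  refine ⟨?_, b1.trans b2⟩
  rcases sign_cases s1 with ⟨ha, hb⟩ | ⟨ha, hb⟩ <;>
    rcases sign_cases s2 with ⟨hb', hc⟩ | ⟨hb', hc⟩
  · exact mul_nonneg ha hc
  · have hb0 : b = 0 := le_antisymm hb' hb
    have : a = 0 := by
      have := b1; rw [hb0] at this; simpa using abs_eq_zero.mp (le_antisymm (by simpa using this) (abs_nonneg a))
    simp [this]
  · have hb0 : b = 0 := le_antisymm hb hb'
    have : a = 0 := by
      have := b1; rw [hb0] at this; simpa using abs_eq_zero.mp (le_antisymm (by simpa using this) (abs_nonneg a))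
    simp [this]
  · nlinarith

private lemma conf_trans {n : ℕ} {a b c : Fin n → ℤ} (h1 : ConformalLE a b)
    (h2 : ConformalLE b c) : ConformalLE a c := fun i =>
  conf_coord_trans (h1 i).1 (h1 i).2 (h2 i).1 (h2 i).2

private lemma conf_refl {n : ℕ} (a : Fin n → ℤ) : ConformalLE a a :=
  fun i => ⟨mul_self_nonneg _, le_rfl⟩

private lemma coord_sub {a b : ℤ} (s : 0 ≤ a * b) (hb : |a| ≤ |b|) :
    0 ≤ (b - a) * b ∧ |b - a| ≤ |b| ∧ (b - a).natAbs + a.natAbs = b.natAbs := by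
  rcases sign_cases s with ⟨ha, hb'⟩ | ⟨ha, hb'⟩
  · rw [abs_of_nonneg ha, abs_of_nonneg hb'] at hb
    refine ⟨mul_nonneg (by omega) hb', ?_, by omega⟩
    rw [abs_of_nonneg (by omega : (0:ℤ) ≤ b - a), abs_of_nonneg hb']; omega
  · rw [abs_of_nonpos ha, abs_of_nonpos hb'] at hb
    refine ⟨by nlinarith, ?_, by omega⟩
    rw [abs_of_nonpos (by omega : b - a ≤ 0), abs_of_nonpos hb']; omega

private lemma coord_strict {a b : ℤ} (s : 0 ≤ a * b) (hb : |a| ≤ |b|) (hne : a ≠ b) :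
    a.natAbs < b.natAbs := by
  rcases sign_cases s with ⟨ha, hb'⟩ | ⟨ha, hb'⟩
  · rw [abs_of_nonneg ha, abs_of_nonneg hb'] at hb; omega
  · rw [abs_of_nonpos ha, abs_of_nonpos hb'] at hb; omega

private lemma coord_le {a b : ℤ} (hb : |a| ≤ |b|) : a.natAbs ≤ b.natAbs := by
  rw [Int.abs_eq_natAbs, Int.abs_eq_natAbs] at hb; exact_mod_cast hb

/-- Every nonzero integer vector in the kernel of `A` is a sign-compatible
(conformal) sum of Graver basis elements. -/
theorem kernel_vector_conformal_sum_of_graver {m n : ℕ} (A : Matrix (Fin m) (Fin n) ℤ)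
    (x : Fin n → ℤ) (hker : A.mulVec x = 0) (hx : x ≠ 0) :
    ∃ (k : ℕ) (g : Fin k → (Fin n → ℤ)),
      (∀ i, g i ∈ GraverBasis A ∧ ConformalLE (g i) x) ∧ x = ∑ i, g i := by
  have key : ∀ N : ℕ, ∀ x : Fin n → ℤ, (∑ i, (x i).natAbs) ≤ N →
      A.mulVec x = 0 → x ≠ 0 →
      ∃ (k : ℕ) (g : Fin k → (Fin n → ℤ)),
        (∀ i, g i ∈ GraverBasis A ∧ ConformalLE (g i) x) ∧ x = ∑ i, g i := by
    intro N
    induction N with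
    | zero =>
      intro x hle _ hx
      exfalso; apply hx; funext i
      have h0 := (Finset.sum_eq_zero_iff).mp (Nat.le_zero.mp hle) i (Finset.mem_univ i)
      simpa [Int.natAbs_eq_zero] using h0
    | succ N ih =>
      intro x hle hker hx
      by_cases hmin : ∀ h : Fin n → ℤ, A.mulVec h = 0 → h ≠ 0 → ConformalLE h x → h = x
      · exact ⟨1, fun _ => x, fun _ => ⟨⟨hker, hx, hmin⟩, conf_refl x⟩, by simp⟩
      · push_neg at hmin
        obtain ⟨h, hker', hne0, hconf, hneq⟩ := hmin
        -- h is strictly smaller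
        obtain ⟨j, hj⟩ := Function.ne_iff.mp hneq
        have hlt : (∑ i, (h i).natAbs) < ∑ i, (x i).natAbs := by
          apply Finset.sum_lt_sum (fun i _ => coord_le (hconf i).2)
          exact ⟨j, Finset.mem_univ j, coord_strict (hconf j).1 (hconf j).2 hj⟩
        obtain ⟨j0, hj0⟩ := Function.ne_iff.mp hne0
        have hpos : 0 < ∑ i, (h i).natAbs :=
          Finset.sum_pos' (fun i _ => Nat.zero_le _)
            ⟨j0, Finset.mem_univ _, Int.natAbs_pos.mpr (by simpa using hj0)⟩
        have hsumeq : (∑ i, ((x - h) i).natAbs) + (∑ i, (h i).natAbs)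
            = ∑ i, (x i).natAbs := by
          rw [← Finset.sum_add_distrib]
          exact Finset.sum_congr rfl fun i _ =>
            (coord_sub (hconf i).1 (hconf i).2).2.2
        have hconf' : ConformalLE (x - h) x := fun i =>
          ⟨(coord_sub (hconf i).1 (hconf i).2).1,
           (coord_sub (hconf i).1 (hconf i).2).2.1⟩
        have hker'' : A.mulVec (x - h) = 0 := by
          rw [Matrix.mulVec_sub, hker, hker', sub_zero]
        have hne' : x - h ≠ 0 := sub_ne_zero.mpr (Ne.symm hneq)
        obtain ⟨k₁, g₁, hg₁, hsum₁⟩ := ih h (by omega) hker' hne0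
        obtain ⟨k₂, g₂, hg₂, hsum₂⟩ := ih (x - h) (by omega) hker'' hne'
        refine ⟨k₁ + k₂, Fin.append g₁ g₂, ?_, ?_⟩
        · intro i
          refine Fin.addCases (fun i₁ => ?_) (fun i₂ => ?_) i
          · rw [Fin.append_left]
            exact ⟨(hg₁ i₁).1, conf_trans (hg₁ i₁).2 hconf⟩
          · rw [Fin.append_right]
            exact ⟨(hg₂ i₂).1, conf_trans (hg₂ i₂).2 hconf'⟩
        · rw [Fin.sum_univ_add]
          simp only [Fin.append_left, Fin.append_right]
          rw [← hsum₁, ← hsum₂]; ring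
  exact key (∑ i, (x i).natAbs) x le_rfl hker hx
end

section
/- The Graver basis G(A) is a test set for the family of integer programs min{wx : Ax = b, l <= x <= u, x ∈ Z^n}: for every non-optimal feasible solution x there exists g ∈ G(A) such that x + g is feasible and w(x+g) < w(x). -/
/-- Feasibility for `{Ax = b, l ≤ x ≤ u}` with bounds in `ℤ ∪ {±∞}` (via `EReal`). -/
def Feasible {m n : ℕ} (A : Matrix (Fin m) (Fin n) ℤ) (b : Fin m → ℤ)
    (l u : Fin n → EReal) (x : Fin n → ℤ) : Prop :=
  A.mulVec x = b ∧ ∀ i, l i ≤ ((x i : ℝ) : EReal) ∧ ((x i : ℝ) : EReal) ≤ u i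

lemma btw_of_conf {a b : ℤ} (h1 : 0 ≤ a * b) (h2 : |a| ≤ |b|) :
    (0 ≤ a ∧ a ≤ b) ∨ (b ≤ a ∧ a ≤ 0) := by
  rcases lt_trichotomy b 0 with hb | hb | hb
  · right
    have ha : a ≤ 0 := by nlinarith
    rw [abs_of_nonpos ha, abs_of_nonpos hb.le] at h2
    omega
  · subst hb
    simp only [abs_zero] at h2
    have : a = 0 := abs_eq_zero.mp (le_antisymm h2 (abs_nonneg a))
    subst this
    left; omega
  · left
    have ha : 0 ≤ a := by nlinarith
    rw [abs_of_nonneg ha, abs_of_nonneg hb.le] at h2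
    omega

lemma conf_of_btw {a b : ℤ} (h : (0 ≤ a ∧ a ≤ b) ∨ (b ≤ a ∧ a ≤ 0)) :
    0 ≤ a * b ∧ |a| ≤ |b| := by
  rcases h with ⟨h1, h2⟩ | ⟨h1, h2⟩
  · exact ⟨mul_nonneg h1 (h1.trans h2), by rw [abs_of_nonneg h1, abs_of_nonneg (h1.trans h2)]; exact h2⟩
  · exact ⟨by nlinarith,
      by rw [abs_of_nonpos h2, abs_of_nonpos (h1.trans h2)]; omega⟩

lemma conformal_refl {n : ℕ} (d : Fin n → ℤ) : ConformalLE d d :=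
  fun i => ⟨mul_self_nonneg _, le_refl _⟩

lemma conformal_trans {n : ℕ} {g h d : Fin n → ℤ}
    (h1 : ConformalLE g h) (h2 : ConformalLE h d) : ConformalLE g d := by
  intro i
  have b1 := btw_of_conf (h1 i).1 (h1 i).2
  have b2 := btw_of_conf (h2 i).1 (h2 i).2
  exact conf_of_btw (by omega)

lemma exists_graver_le {m n : ℕ} (A : Matrix (Fin m) (Fin n) ℤ) :
    ∀ N : ℕ, ∀ d : Fin n → ℤ, (∑ i, (d i).natAbs) ≤ N →
      A.mulVec d = 0 → d ≠ 0 → ∃ g ∈ GraverBasis A, ConformalLE g d := by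
  intro N
  induction N with
  | zero =>
    intro d hN _ hd0
    exfalso
    apply hd0
    funext i
    have : (d i).natAbs = 0 := by
      have := Finset.sum_eq_zero_iff.mp (Nat.le_zero.mp hN) i (Finset.mem_univ i)
      exact this
    simp only [Pi.zero_apply]
    omega
  | succ N ih =>
    intro d hN hker hd0
    by_cases H : ∀ h : Fin n → ℤ, A.mulVec h = 0 → h ≠ 0 → ConformalLE h d → h = d
    · exact ⟨d, ⟨hker, hd0, H⟩, conformal_refl d⟩
    · push_neg at H
      obtain ⟨h, hk, hne0, hcf, hned⟩ := H
      have hlt : (∑ i, (h i).natAbs) < ∑ i, (d i).natAbs := by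
        apply Finset.sum_lt_sum
        · intro i _
          have := btw_of_conf (hcf i).1 (hcf i).2
          omega
        · have : ∃ i, h i ≠ d i := by
            by_contra hc; push_neg at hc; exact hned (funext hc)
          obtain ⟨i, hi⟩ := this
          refine ⟨i, Finset.mem_univ i, ?_⟩
          have := btw_of_conf (hcf i).1 (hcf i).2
          omega
      obtain ⟨g, hg, hgc⟩ := ih h (by omega) hk hne0
      exact ⟨g, hg, conformal_trans hgc hcf⟩

lemma ereal_bound {l u : EReal} {p q r : ℤ}
    (hp1 : l ≤ ((p : ℝ) : EReal)) (hp2 : ((p : ℝ) : EReal) ≤ u)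
    (hq1 : l ≤ ((q : ℝ) : EReal)) (hq2 : ((q : ℝ) : EReal) ≤ u)
    (h : (p ≤ r ∧ r ≤ q) ∨ (q ≤ r ∧ r ≤ p)) :
    l ≤ ((r : ℝ) : EReal) ∧ ((r : ℝ) : EReal) ≤ u := by
  have mono : ∀ a c : ℤ, a ≤ c → ((a : ℝ) : EReal) ≤ ((c : ℝ) : EReal) := by
    intro a c hac
    exact EReal.coe_le_coe_iff.mpr (by exact_mod_cast hac)
  rcases h with ⟨h1, h2⟩ | ⟨h1, h2⟩
  · exact ⟨hp1.trans (mono _ _ h1), (mono _ _ h2).trans hq2⟩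
  · exact ⟨hq1.trans (mono _ _ h1), (mono _ _ h2).trans hp2⟩

lemma key {m n : ℕ} (A : Matrix (Fin m) (Fin n) ℤ)
    (w : Fin n → ℤ) (b : Fin m → ℤ) (l u : Fin n → EReal) (x : Fin n → ℤ)
    (hx : Feasible A b l u x) :
    ∀ N : ℕ, ∀ d : Fin n → ℤ, (∑ i, (d i).natAbs) ≤ N →
      Feasible A b l u (x + d) → (∑ i, w i * d i) < 0 →
      ∃ g ∈ GraverBasis A, Feasible A b l u (x + g) ∧ (∑ i, w i * g i) < 0 := by
  intro N
  induction N with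
  | zero =>
    intro d hN _ hw
    exfalso
    have : ∀ i, d i = 0 := by
      intro i
      have := Finset.sum_eq_zero_iff.mp (Nat.le_zero.mp hN) i (Finset.mem_univ i)
      omega
    simp [this] at hw
  | succ N ih =>
    intro d hN hfeas hw
    have hker : A.mulVec d = 0 := by
      have h1 : b + A.mulVec d = b := by
        rw [← hx.1, ← Matrix.mulVec_add]
        rw [hx.1]
        exact hfeas.1
      exact add_left_cancel (h1.trans (add_zero b).symm)
    have hd0 : d ≠ 0 := by
      rintro rfl
      simp at hw
    obtain ⟨g, hgG, hgc⟩ := exists_graver_le A (∑ i, (d i).natAbs) d le_rfl hker hd0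
    have hxg : Feasible A b l u (x + g) := by
      constructor
      · rw [Matrix.mulVec_add, hgG.1, add_zero, hx.1]
      · intro i
        have hb := btw_of_conf (hgc i).1 (hgc i).2
        have hfi := hfeas.2 i
        simp only [Pi.add_apply] at hfi ⊢
        exact ereal_bound (hx.2 i).1 (hx.2 i).2 hfi.1 hfi.2 (by omega)
    rcases lt_or_ge (∑ i, w i * g i) 0 with hwg | hwg
    · exact ⟨g, hgG, hxg, hwg⟩
    · set d' : Fin n → ℤ := d - g with hd'
      have hwd' : (∑ i, w i * d' i) < 0 := by
        have : (∑ i, w i * d' i) = (∑ i, w i * d i) - ∑ i, w i * g i := by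
          rw [← Finset.sum_sub_distrib]
          congr 1; funext i; simp [hd', mul_sub]
        omega
      have hfeas' : Feasible A b l u (x + d') := by
        constructor
        · rw [Matrix.mulVec_add]
          have : A.mulVec d' = 0 := by
            rw [hd', Matrix.mulVec_sub, hker, hgG.1, sub_zero]
          rw [this, add_zero, hx.1]
        · intro i
          have hb := btw_of_conf (hgc i).1 (hgc i).2
          have hfi := hfeas.2 i
          simp only [Pi.add_apply] at hfi ⊢
          have hd'i : d' i = d i - g i := by simp [hd']
          rw [hd'i]
          exact ereal_bound (hx.2 i).1 (hx.2 i).2 hfi.1 hfi.2 (by omega)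
      have hlt : (∑ i, (d' i).natAbs) < ∑ i, (d i).natAbs := by
        apply Finset.sum_lt_sum
        · intro i _
          have hb := btw_of_conf (hgc i).1 (hgc i).2
          have : d' i = d i - g i := by simp [hd']
          omega
        · have : ∃ i, g i ≠ 0 := by
            by_contra hc; push_neg at hc; exact hgG.2.1 (funext hc)
          obtain ⟨i, hi⟩ := this
          refine ⟨i, Finset.mem_univ i, ?_⟩
          have hb := btw_of_conf (hgc i).1 (hgc i).2
          have : d' i = d i - g i := by simp [hd']
          omega
      exact ih d' (by omega) hfeas' hwd'

/-- The Graver basis is a test set: for every non-optimal feasible solution `x`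
of `min{wx : Ax = b, l ≤ x ≤ u, x ∈ ℤ^n}` there is `g ∈ G(A)` with `x + g`
feasible and `w(x+g) < w x`. -/
theorem graverBasis_is_test_set {m n : ℕ} (A : Matrix (Fin m) (Fin n) ℤ)
    (w : Fin n → ℤ) (b : Fin m → ℤ) (l u : Fin n → EReal) (x : Fin n → ℤ)
    (hx : Feasible A b l u x)
    (hnonopt : ∃ y, Feasible A b l u y ∧ ∑ i, w i * y i < ∑ i, w i * x i) :
    ∃ g ∈ GraverBasis A,
      Feasible A b l u (x + g) ∧ ∑ i, w i * (x + g) i < ∑ i, w i * x i := by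
  obtain ⟨y, hy, hwy⟩ := hnonopt
  set d : Fin n → ℤ := y - x with hd
  have hxd : x + d = y := by funext i; simp [hd]
  have hwd : (∑ i, w i * d i) < 0 := by
    have : (∑ i, w i * d i) = (∑ i, w i * y i) - ∑ i, w i * x i := by
      rw [← Finset.sum_sub_distrib]
      congr 1; funext i; simp [hd, mul_sub]
    omega
  obtain ⟨g, hgG, hxg, hwg⟩ :=
    key A w b l u x hx (∑ i, (d i).natAbs) d le_rfl (by rw [hxd]; exact hy) hwd
  refine ⟨g, hgG, hxg, ?_⟩
  have : (∑ i, w i * (x + g) i) = (∑ i, w i * x i) + ∑ i, w i * g i := by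
    rw [← Finset.sum_add_distrib]
    congr 1; funext i; simp [mul_add]
  omega
end

section
/- For any integer matrix A ∈ Z^{m×n}, the treedepth of the incidence graph of A is at most the treedepth of the primal graph of A plus one: td_I(A) <= td_P(A) + 1. -/
/-- The primal graph of a matrix: vertices are columns, two columns adjacent
iff some row is nonzero in both. -/
def primalGraph {α β : Type} (A : Matrix α β ℤ) : SimpleGraph β :=
  SimpleGraph.fromRel fun i j => ∃ k, A k i ≠ 0 ∧ A k j ≠ 0

/-- The incidence graph of `A`: bipartite on columns (`inl`) and rows (`inr`),
with an edge for each nonzero entry. -/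
def incidenceGraph {m n : ℕ} (A : Matrix (Fin m) (Fin n) ℤ) :
    SimpleGraph (Fin n ⊕ Fin m) :=
  SimpleGraph.fromRel fun u v =>
    match u, v with
    | Sum.inl i, Sum.inr j => A j i ≠ 0
    | _, _ => False

/-- `G` has treedepth at most `k` (forest-order encoding). -/
def TreedepthLE {V : Type} (G : SimpleGraph V) (k : ℕ) : Prop :=
  ∃ r : V → V → Prop,
    (∀ v, ¬ r v v) ∧
    (∀ u v w, r u v → r v w → r u w) ∧
    (∀ u w v, r u v → r w v → u = w ∨ r u w ∨ r w u) ∧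
    (∀ u v, G.Adj u v → r u v ∨ r v u) ∧
    (∀ s : Finset V, (∀ a ∈ s, ∀ b ∈ s, a ≠ b → r a b ∨ r b a) → s.card ≤ k)

/-- The treedepth of the incidence graph is at most the treedepth of the
primal graph plus one: `td_I(A) ≤ td_P(A) + 1`. -/
theorem incidence_treedepth_le_primal_treedepth_add_one {m n : ℕ}
    (A : Matrix (Fin m) (Fin n) ℤ) (k : ℕ) (h : TreedepthLE (primalGraph A) k) :
    TreedepthLE (incidenceGraph A) (k + 1) := by
  obtain ⟨r, hirr, htrans, hforest, hadj, hcard⟩ := h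
  -- adjacency in primal graph for two support columns of a row
  have hsupp : ∀ (ρ : Fin m) (c c' : Fin n), c ≠ c' → A ρ c ≠ 0 → A ρ c' ≠ 0 →
      r c c' ∨ r c' c := by
    intro ρ c c' hne hc hc'
    exact hadj c c' ⟨hne, Or.inl ⟨ρ, hc, hc'⟩⟩
  -- weak ancestors of a common vertex are comparable
  have hweak : ∀ a b d : Fin n, (a = d ∨ r a d) → (b = d ∨ r b d) →
      a = b ∨ r a b ∨ r b a := by
    intro a b d ha hb
    rcases ha with rfl | ha
    · rcases hb with rfl | hb
      · exact Or.inl rfl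
      · exact Or.inr (Or.inr hb)
    · rcases hb with rfl | hb
      · exact Or.inr (Or.inl ha)
      · exact hforest a b d ha hb
    -- new order
  refine ⟨fun u v => match u, v with
    | Sum.inl a, Sum.inl b => r a b
    | Sum.inl a, Sum.inr ρ => ∃ c, A ρ c ≠ 0 ∧ (a = c ∨ r a c)
    | Sum.inr _, _ => False, ?_, ?_, ?_, ?_, ?_⟩
  · rintro (a | ρ)
    · exact hirr a
    · exact id
  · rintro (a | ρ) (b | σ) (c | τ) h1 h2 <;> try exact h1.elim
    · exact htrans a b c h1 h2
    · obtain ⟨d, hd, hbd⟩ := h2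
      refine ⟨d, hd, Or.inr ?_⟩
      rcases hbd with rfl | hbd
      · exact h1
      · exact htrans a b d h1 hbd
    · exact h2.elim
    · exact h2.elim
  · rintro (a | ρ) (b | σ) (c | τ) h1 h2 <;> try exact h1.elim
    all_goals try exact h2.elim
    · rcases hforest a b c h1 h2 with h | h
      · exact Or.inl (congrArg Sum.inl h)
      · exact Or.inr h
    · obtain ⟨c, hc, hac⟩ := h1
      obtain ⟨c', hc', hbc'⟩ := h2
      have key : a = b ∨ r a b ∨ r b a := by
        by_cases hcc : c = c'
        · subst hcc; exact hweak a b c hac hbc'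
        · rcases hsupp τ c c' hcc hc hc' with hr | hr
          · refine hweak a b c' ?_ hbc'
            rcases hac with rfl | hac
            · exact Or.inr hr
            · exact Or.inr (htrans a c c' hac hr)
          · refine hweak a b c hac ?_
            rcases hbc' with rfl | hbc'
            · exact Or.inr hr
            · exact Or.inr (htrans b c' c hbc' hr)
      rcases key with h | h
      · exact Or.inl (congrArg Sum.inl h)
      · exact Or.inr h
  · rintro (a | ρ) (b | σ) ⟨hne, hrel⟩
    · exact absurd (hrel.elim id id) id
    · rcases hrel with hr | hr
      · exact Or.inl ⟨a, hr, Or.inl rfl⟩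
      · exact hr.elim
    · rcases hrel with hr | hr
      · exact hr.elim
      · exact Or.inr ⟨b, hr, Or.inl rfl⟩
    · exact absurd (hrel.elim id id) id
  · intro s hs
    have hsum := Finset.card_toLeft_add_card_toRight (u := s)
    have h1 : s.toLeft.card ≤ k := by
      apply hcard
      intro a ha b hb hab
      exact hs (Sum.inl a) (Finset.mem_toLeft.1 ha) (Sum.inl b)
        (Finset.mem_toLeft.1 hb) (fun hh => hab (Sum.inl.inj hh))
    have h2 : s.toRight.card ≤ 1 := by
      rw [Finset.card_le_one]
      intro a ha b hb
      by_contra hab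
      exact (hs (Sum.inr a) (Finset.mem_toRight.1 ha) (Sum.inr b)
        (Finset.mem_toRight.1 hb) (fun hh => hab (Sum.inr.inj hh))).elim id id
    omega
end

section
/- For each n >= 2 there exists an integer matrix A ∈ Z^{(n-1)×n} with primal and dual treewidth 1, largest absolute entry 2, such that some Graver basis element g of A satisfies ||g||_∞ >= 2^{n-1}; namely the matrix with rows e_i^T·2 - e_{i+1}^T (entries A_{i,i} = 2, A_{i,i+1} = -1, zero elsewhere) has the vector (1, 2, 4, ..., 2^{n-1}) in its Graver basis. -/
open SimpleGraph


/-- `G` has treewidth at most `k`. -/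
def TreewidthLE {V : Type} (G : SimpleGraph V) (k : ℕ) : Prop :=
  ∃ (ι : Type) (T : SimpleGraph ι) (B : ι → Finset V),
    T.Connected ∧ T.IsAcyclic ∧
    (∀ u v : V, G.Adj u v → ∃ a, u ∈ B a ∧ v ∈ B a) ∧
    (∀ v : V, (T.induce {a : ι | v ∈ B a}).Connected) ∧
    (∀ a, (B a).card ≤ k + 1)

lemma reachable_pred {V : Type*} (G : SimpleGraph V) (P : V → Prop)
    (h : ∀ x y, G.Adj x y → (P x ↔ P y)) {x y : V} (r : G.Reachable x y) : P x ↔ P y := by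
  obtain ⟨w⟩ := r
  induction w with
  | nil => rfl
  | cons a _ ih => exact (h _ _ a).trans ih

lemma pathGraph_aux {m : ℕ} (u v : Fin m) (huv : u.val + 1 = v.val)
    (hr : ((pathGraph m) \ fromEdgeSet {s(u, v)}).Reachable u v) : False := by
  have := reachable_pred _ (fun x : Fin m => x.val ≤ u.val) ?_ hr
  · omega
  · intro x y hxy
    obtain ⟨hadj, hne⟩ := hxy
    rw [fromEdgeSet_adj] at hne
    push_neg at hne
    rw [pathGraph_adj] at hadj
    constructor <;> intro hle
    · rcases hadj with h1 | h1
      · rcases Nat.lt_or_ge x.val u.val with h2 | h2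
        · omega
        · have hx : x = u := Fin.ext (by omega)
          have hy : y = v := Fin.ext (by omega)
          have := congrArg Fin.val (hne (by rw [hx, hy]; rfl))
          omega
      · omega
    · rcases hadj with h1 | h1
      · omega
      · rcases Nat.lt_or_ge y.val u.val with h2 | h2
        · omega
        · have hy : y = u := Fin.ext (by omega)
          have hx : x = v := Fin.ext (by omega)
          have := congrArg Fin.val (hne (by rw [hx, hy, Sym2.eq_swap]; rfl))
          omega

lemma pathGraph_isAcyclic (m : ℕ) : (pathGraph m).IsAcyclic := by
  rw [isAcyclic_iff_forall_adj_isBridge]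
  intro u v hadj
  rw [isBridge_iff]
  intro hr
  rcases pathGraph_adj.mp hadj with h1 | h1
  · exact pathGraph_aux u v h1 hr
  · exact pathGraph_aux v u h1 (show ((pathGraph m) \ fromEdgeSet {s(v, u)}).Reachable v u by rw [Sym2.eq_swap]; exact hr.symm)


lemma tw_le_one {m : ℕ} (hm : 0 < m) (G : SimpleGraph (Fin m))
    (h : ∀ u v, G.Adj u v → (u.val + 1 = v.val ∨ v.val + 1 = u.val)) :
    TreewidthLE G 1 := by
  refine ⟨Fin m, pathGraph m, fun a => {a, ⟨min (a.val + 1) (m - 1), by omega⟩},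
    Nat.succ_pred_eq_of_pos hm ▸ pathGraph_connected (m - 1), pathGraph_isAcyclic m, ?_, ?_, ?_⟩
  · intro u v hadj
    rcases h u v hadj with h1 | h1
    · refine ⟨u, by simp, ?_⟩
      have : v = (⟨min (u.val + 1) (m - 1), by omega⟩ : Fin m) := Fin.ext (by simp; omega)
      rw [this]; simp
    · refine ⟨v, ?_, by simp⟩
      have : u = (⟨min (v.val + 1) (m - 1), by omega⟩ : Fin m) := Fin.ext (by simp; omega)
      rw [this]; simp
  · intro v
    have hmem : ∀ b : Fin m, v ∈ ({b, ⟨min (b.val + 1) (m - 1), by omega⟩} : Finset (Fin m)) →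
        b = v ∨ b.val + 1 = v.val := by
      intro b hb
      rcases Finset.mem_insert.mp hb with h1 | h1
      · exact Or.inl h1.symm
      · have := congrArg Fin.val (Finset.mem_singleton.mp h1)
        simp at this
        rcases Nat.lt_or_ge (b.val + 1) m with h2 | h2
        · right; omega
        · left; exact Fin.ext (by omega)
    haveI : Nonempty {a : Fin m | v ∈ ({a, ⟨min (a.val + 1) (m - 1), by omega⟩} : Finset (Fin m))} :=
      ⟨⟨v, by simp⟩⟩
    constructor
    rintro ⟨b, hb⟩ ⟨c, hc⟩
    by_cases hbc : b = c
    · subst hbc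
      rfl
    · have hne : b.val ≠ c.val := fun hv => hbc (Fin.ext hv)
      refine Adj.reachable ?_
      show (pathGraph m).Adj b c
      rcases hmem b hb with h1 | h1 <;> rcases hmem c hc with h2 | h2 <;>
        rw [pathGraph_adj] <;> subst_vars <;> omega
  · intro a
    exact (Finset.card_insert_le _ _).trans (by simp)

/-- For every `n ≥ 2`, the matrix `A ∈ ℤ^{(n-1)×n}` with `A_{i,i} = 2`,
`A_{i,i+1} = -1` and zeros elsewhere has primal and dual treewidth `1`, all
entries of absolute value at most `2`, and the vector `(1, 2, 4, …, 2^{n-1})`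
belongs to its Graver basis, so some Graver element has `ℓ_∞`-norm at least
`2^{n-1}`. -/
theorem graver_sup_norm_exponential_lower_bound (n : ℕ) (hn : 2 ≤ n)
    (A : Matrix (Fin (n - 1)) (Fin n) ℤ)
    (hA : ∀ (i : Fin (n - 1)) (j : Fin n),
      A i j = if (j : ℕ) = (i : ℕ) then 2
        else if (j : ℕ) = (i : ℕ) + 1 then -1 else 0) :
    TreewidthLE (primalGraph A) 1 ∧
    TreewidthLE (primalGraph A.transpose) 1 ∧
    (∀ i j, |A i j| ≤ 2) ∧
    (fun j : Fin n => (2 : ℤ) ^ (j : ℕ)) ∈ GraverBasis A ∧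
    (∃ i : Fin n, (2 : ℤ) ^ (n - 1) ≤ |(2 : ℤ) ^ (i : ℕ)|) := by
  have hsupp : ∀ (k : Fin (n - 1)) (j : Fin n), A k j ≠ 0 → j.val = k.val ∨ j.val = k.val + 1 := by
    intro k j hkj
    rw [hA] at hkj
    by_cases h1 : (j : ℕ) = (k : ℕ)
    · exact Or.inl h1
    · by_cases h2 : (j : ℕ) = (k : ℕ) + 1
      · exact Or.inr h2
      · simp [h1, h2] at hkj
  -- the two key nonzero entries
  have key : ∀ h : Fin n → ℤ, ∀ i : Fin (n - 1),
      A.mulVec h i = 2 * h ⟨i.val, by omega⟩ - h ⟨i.val + 1, by omega⟩ := by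
    intro h i
    have hne : (⟨i.val, by omega⟩ : Fin n) ≠ ⟨i.val + 1, by omega⟩ := by
      intro hh; have := congrArg Fin.val hh; simp at this
    rw [Matrix.mulVec, dotProduct]
    rw [Fintype.sum_eq_add (⟨i.val, by omega⟩ : Fin n) ⟨i.val + 1, by omega⟩ hne]
    · rw [hA, hA]
      simp
      ring
    · rintro c ⟨hc1, hc2⟩
      rw [hA]
      have hv1 : c.val ≠ i.val := fun hv => hc1 (Fin.ext hv)
      have hv2 : c.val ≠ i.val + 1 := fun hv => hc2 (Fin.ext hv)
      simp [hv1, hv2]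
  refine ⟨?_, ?_, ?_, ⟨?_, ?_, ?_⟩, ?_⟩
  · -- primal treewidth
    apply tw_le_one (by omega)
    intro u v hadj
    rw [primalGraph, SimpleGraph.fromRel_adj] at hadj
    obtain ⟨hne, h1⟩ := hadj
    have hne' : u.val ≠ v.val := fun hv => hne (Fin.ext hv)
    rcases h1 with ⟨k, hu, hv⟩ | ⟨k, hv, hu⟩ <;>
    · rcases hsupp k u hu with h2 | h2 <;> rcases hsupp k v hv with h3 | h3 <;> omega
  · -- dual treewidth
    apply tw_le_one (by omega)
    intro u v hadj
    rw [primalGraph, SimpleGraph.fromRel_adj] at hadj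
    obtain ⟨hne, h1⟩ := hadj
    have hne' : u.val ≠ v.val := fun hv => hne (Fin.ext hv)
    rcases h1 with ⟨k, hu, hv⟩ | ⟨k, hv, hu⟩ <;>
    · rw [Matrix.transpose_apply] at hu hv
      rcases hsupp u k hu with h2 | h2 <;> rcases hsupp v k hv with h3 | h3 <;> omega
  · intro i j
    rw [hA]
    split_ifs <;> norm_num
  · -- A g = 0
    funext i
    rw [key]
    simp [pow_succ]
    ring
  · -- g ≠ 0
    intro hg
    have := congrFun hg ⟨0, by omega⟩
    simp at this
  · -- minimality
    intro h hAh hne hle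
    have h0 := hle ⟨0, by omega⟩
    simp only [Fin.val_mk, pow_zero, mul_one, abs_one] at h0
    have hrec : ∀ k : ℕ, ∀ hk : k < n, h ⟨k, hk⟩ = h ⟨0, by omega⟩ * 2 ^ k := by
      intro k
      induction k with
      | zero => intro hk; simp
      | succ k ih =>
        intro hk
        have hk' : k < n - 1 := by omega
        have := key h ⟨k, hk'⟩
        rw [hAh] at this
        simp only [Fin.val_mk, Pi.zero_apply] at this
        have h2 : h ⟨k + 1, hk⟩ = 2 * h ⟨k, by omega⟩ := by omega
        rw [h2, ih (by omega)]
        ring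
    have h0v : h ⟨0, by omega⟩ = 0 ∨ h ⟨0, by omega⟩ = 1 := by
      have := abs_le.mp h0.2
      omega
    rcases h0v with h0v | h0v
    · exfalso
      apply hne
      funext j
      have := hrec j.val j.isLt
      rw [Fin.eta] at this
      rw [this, h0v, Pi.zero_apply, zero_mul]
    · funext j
      have := hrec j.val j.isLt
      rw [Fin.eta] at this
      rw [this, h0v, one_mul]
  · refine ⟨⟨n - 1, by omega⟩, ?_⟩
    simp [abs_of_nonneg (pow_nonneg (by norm_num : (0:ℤ) ≤ 2) _)]
end

section
/- Transforming an inequality system Ax <= b into standard equality form by introducing slack variables (Ax + Is = b, s >= 0) increases the primal treedepth of the constraint matrix by at most one: td_P((A | I)) <= td_P(A) + 1. -/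
/-- Appending an identity block of slack variables increases the primal
treedepth by at most one: `td_P((A | I)) ≤ td_P(A) + 1`. -/
theorem primal_treedepth_slack_variables {m n : ℕ} (A : Matrix (Fin m) (Fin n) ℤ)
    (k : ℕ) (h : TreedepthLE (primalGraph A) k) :
    TreedepthLE (primalGraph (Matrix.fromCols A (1 : Matrix (Fin m) (Fin m) ℤ))) (k + 1) := by
  obtain ⟨r, hirr, htrans, hbranch, hadj, hcard⟩ := h
  -- comparability of support elements of a row
  have hsupp : ∀ (j : Fin m) (a b : Fin n), A j a ≠ 0 → A j b ≠ 0 → a = b ∨ r a b ∨ r b a := by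
    intro j a b ha hb
    rcases eq_or_ne a b with rfl | hne
    · exact Or.inl rfl
    · have : (primalGraph A).Adj a b := by
        simp only [primalGraph, SimpleGraph.fromRel_adj]
        exact ⟨hne, Or.inl ⟨j, ha, hb⟩⟩
      exact Or.inr (hadj a b this)
  set r' : (Fin n ⊕ Fin m) → (Fin n ⊕ Fin m) → Prop := fun x y =>
    match x, y with
    | Sum.inl u, Sum.inl v => r u v
    | Sum.inl u, Sum.inr j => A j u ≠ 0 ∨ ∃ v, A j v ≠ 0 ∧ r u v
    | Sum.inr _, _ => False
    with hr'
  refine ⟨r', ?_, ?_, ?_, ?_, ?_⟩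
  · rintro (v | j)
    · exact hirr v
    · simp [hr']
  · rintro (u | u) (v | v) (w | w) h1 h2
    · exact htrans _ _ _ h1 h2
    · simp only [hr'] at h1 h2 ⊢
      rcases h2 with h2 | ⟨x, hx, hrx⟩
      · exact Or.inr ⟨v, h2, h1⟩
      · exact Or.inr ⟨x, hx, htrans _ _ _ h1 hrx⟩
    · exact h2.elim
    · exact h2.elim
    · exact h1.elim
    · exact h1.elim
    · exact h1.elim
    · exact h1.elim
  · rintro (u | u) (w | w) (v | v) h1 h2
    · rcases hbranch u w v h1 h2 with h | h
      · exact Or.inl (congrArg Sum.inl h)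
      · exact Or.inr h
    · simp only [hr'] at h1 h2 ⊢
      -- v : Fin m slack, u w : Fin n
      -- from h1 h2: each of u, w is in support of row v or ancestor of support elt
      have key : ∀ a : Fin n, (A v a ≠ 0 ∨ ∃ x, A v x ≠ 0 ∧ r a x) →
          ∃ x, A v x ≠ 0 ∧ (a = x ∨ r a x) := by
        rintro a (ha | ⟨x, hx, hr⟩)
        · exact ⟨a, ha, Or.inl rfl⟩
        · exact ⟨x, hx, Or.inr hr⟩
      obtain ⟨x, hx, hux⟩ := key u h1
      obtain ⟨y, hy, hwy⟩ := key w h2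
      have hxy := hsupp v x y hx hy
      -- reduce to comparing u w both ancestors-or-equal of elements on one chain
      have comp : ∀ a b c : Fin n, (a = c ∨ r a c) → (b = c ∨ r b c) →
          a = b ∨ r a b ∨ r b a := by
        rintro a b c (rfl | ha) (rfl | hb)
        · exact Or.inl rfl
        · exact Or.inr (Or.inr hb)
        · exact Or.inr (Or.inl ha)
        · exact hbranch a b c ha hb
      rcases hxy with rfl | hxy | hyx
      · rcases comp u w x hux hwy with h | h
        · exact Or.inl (congrArg Sum.inl h)
        · exact Or.inr h
      · have hux' : u = y ∨ r u y := by
          rcases hux with rfl | h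
          · exact Or.inr hxy
          · exact Or.inr (htrans _ _ _ h hxy)
        rcases comp u w y hux' hwy with h | h
        · exact Or.inl (congrArg Sum.inl h)
        · exact Or.inr h
      · have hwy' : w = x ∨ r w x := by
          rcases hwy with rfl | h
          · exact Or.inr hyx
          · exact Or.inr (htrans _ _ _ h hyx)
        rcases comp u w x hux hwy' with h | h
        · exact Or.inl (congrArg Sum.inl h)
        · exact Or.inr h
    · exact h2.elim
    · exact h2.elim
    · exact h1.elim
    · exact h1.elim
    · exact h1.elim
    · exact h1.elim
  · rintro (u | u) (v | v) hadj'
    · simp only [primalGraph, SimpleGraph.fromRel_adj] at hadj'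
      obtain ⟨hne, hrel⟩ := hadj'
      have : (primalGraph A).Adj u v := by
        simp only [primalGraph, SimpleGraph.fromRel_adj]
        refine ⟨fun h => hne (congrArg Sum.inl h), ?_⟩
        simpa [Matrix.fromCols] using hrel
      exact hadj u v this
    · simp only [primalGraph, SimpleGraph.fromRel_adj] at hadj'
      obtain ⟨hne, hrel⟩ := hadj'
      left
      simp only [hr']
      left
      rcases hrel with ⟨j, hj1, hj2⟩ | ⟨j, hj1, hj2⟩
      · simp only [Matrix.fromCols] at hj1 hj2
        simp only [Matrix.of_apply] at hj1 hj2
        have : j = v := by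
          by_contra hne'
          exact hj2 (by simp [Matrix.one_apply, hne'])
        subst this; exact hj1
      · simp only [Matrix.fromCols] at hj1 hj2
        simp only [Matrix.of_apply] at hj1 hj2
        have : j = v := by
          by_contra hne'
          exact hj1 (by simp [Matrix.one_apply, hne'])
        subst this; exact hj2
    · simp only [primalGraph, SimpleGraph.fromRel_adj] at hadj'
      obtain ⟨hne, hrel⟩ := hadj'
      right
      simp only [hr']
      left
      rcases hrel with ⟨j, hj1, hj2⟩ | ⟨j, hj1, hj2⟩
      · simp only [Matrix.fromCols, Matrix.of_apply] at hj1 hj2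
        have : j = u := by
          by_contra hne'
          exact hj1 (by simp [Matrix.one_apply, hne'])
        subst this; exact hj2
      · simp only [Matrix.fromCols, Matrix.of_apply] at hj1 hj2
        have : j = u := by
          by_contra hne'
          exact hj2 (by simp [Matrix.one_apply, hne'])
        subst this; exact hj1
    · -- two slack columns: not adjacent
      exfalso
      simp only [primalGraph, SimpleGraph.fromRel_adj] at hadj'
      obtain ⟨hne, hrel⟩ := hadj'
      have hne' : u ≠ v := fun h => hne (congrArg Sum.inr h)
      rcases hrel with ⟨j, hj1, hj2⟩ | ⟨j, hj1, hj2⟩ <;>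
        simp only [Matrix.fromCols, Matrix.of_apply] at hj1 hj2
      · have h1 : j = u := by
          by_contra hc; exact hj1 (by simp [Matrix.one_apply, hc])
        have h2 : j = v := by
          by_contra hc; exact hj2 (by simp [Matrix.one_apply, hc])
        exact hne' (h1 ▸ h2)
      · have h1 : j = v := by
          by_contra hc; exact hj1 (by simp [Matrix.one_apply, hc])
        have h2 : j = u := by
          by_contra hc; exact hj2 (by simp [Matrix.one_apply, hc])
        exact hne' (h2 ▸ h1)
  · -- cardinality
    intro s hs
    classical
    set t : Finset (Fin n) := s.preimage Sum.inl (Function.Injective.injOn Sum.inl_injective)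
      with ht
    have htchain : ∀ a ∈ t, ∀ b ∈ t, a ≠ b → r a b ∨ r b a := by
      intro a ha b hb hne
      have ha' : Sum.inl a ∈ s := by simpa [ht, Finset.mem_preimage] using ha
      have hb' : Sum.inl b ∈ s := by simpa [ht, Finset.mem_preimage] using hb
      have := hs _ ha' _ hb' (fun h => hne (Sum.inl_injective h))
      simpa [hr'] using this
    have htk := hcard t htchain
    -- at most one inr element
    have hone : (s.filter (fun x => x.isRight)).card ≤ 1 := by
      apply Finset.card_le_one.mpr
      intro a ha b hb
      simp only [Finset.mem_filter] at ha hb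
      by_contra hne
      rcases hs a ha.1 b hb.1 hne with hrel | hrel
      · obtain ⟨a', rfl⟩ := Sum.isRight_iff.mp ha.2
        exact hrel
      · obtain ⟨b', rfl⟩ := Sum.isRight_iff.mp hb.2
        exact hrel
    have hfl : (s.filter (fun x => x.isLeft)).card = t.card := by
      rw [ht]
      symm
      apply Finset.card_bij (fun a _ => Sum.inl a)
      · intro a ha
        simp only [Finset.mem_preimage] at ha
        simp [Finset.mem_filter, ha]
      · intro a _ b _ hab
        exact Sum.inl_injective hab
      · intro b hb
        simp only [Finset.mem_filter] at hb
        obtain ⟨b', rfl⟩ := Sum.isLeft_iff.mp hb.2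
        exact ⟨b', by simpa [Finset.mem_preimage] using hb.1, rfl⟩
    have hsplit : s.card = (s.filter (fun x => x.isLeft)).card
        + (s.filter (fun x => x.isRight)).card := by
      have he : Finset.filter (fun a => ¬ a.isLeft = true) s
          = Finset.filter (fun x => x.isRight = true) s := by
        apply Finset.filter_congr
        intro x _
        cases x <;> simp
      rw [← he, Finset.card_filter_add_card_filter_not]
    omega
end
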